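/- arXiv:1704.06737 — 10 statements merged into one kernel-verified Lean document; each statement's English description precedes it below -/
import Mathlib

section
/- Let U, V be subspaces of ℝ^n, x ∈ ℝ^n, and y = R_U(x). Then P_{U∩V}(x) = P_{U∩V}(y) and dist(x, U∩V) = dist(y, U∩V). -/
/-! Since `U ∩ V ≤ U`, projecting onto `U ∩ V` factors through the projection onto `U`, so it
cannot tell `x` from `R_U x = 2 P_U x - x`. The reflection `R_U` is an isometry fixing
`P_{U∩V} x ∈ U`, so it maps `x - P_{U∩V} x` to `R_U x - P_{U∩V} (R_U x)` and preserves its norm. -/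

namespace Submodule

variable {𝕜 E : Type*} [RCLike 𝕜] [NormedAddCommGroup E] [InnerProductSpace 𝕜 E]
  {K U : Submodule 𝕜 E} [K.HasOrthogonalProjection] [U.HasOrthogonalProjection]

theorem starProjection_reflection_of_le (h : K ≤ U) (x : E) :
    K.starProjection (U.reflection x) = K.starProjection x := by
  rw [reflection_apply, map_sub, map_nsmul, ← ContinuousLinearMap.comp_apply,
    starProjection_comp_starProjection_of_le h, two_nsmul, add_sub_cancel_right]

theorem norm_reflection_sub_starProjection_of_le (h : K ≤ U) (x : E) :
    ‖U.reflection x - K.starProjection (U.reflection x)‖ = ‖x - K.starProjection x‖ := by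
  calc ‖U.reflection x - K.starProjection (U.reflection x)‖
      = ‖U.reflection (x - K.starProjection x)‖ := by
        rw [map_sub, reflection_mem_subspace_eq_self (h (K.starProjection_apply_mem x)),
          starProjection_reflection_of_le h]
    _ = ‖x - K.starProjection x‖ := U.reflection.norm_map _

end Submodule

/-- Reflecting across `U` does not change the projection onto `U ⊓ V` nor the
distance to `U ⊓ V`. -/
theorem proj_inter_reflection (n : ℕ) (U V : Submodule ℝ (EuclideanSpace ℝ (Fin n)))
    (x : EuclideanSpace ℝ (Fin n))
    (y : EuclideanSpace ℝ (Fin n))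
    (hy : y = 2 • (Submodule.orthogonalProjectionOnto U x : EuclideanSpace ℝ (Fin n)) - x) :
    (Submodule.orthogonalProjectionOnto (U ⊓ V) x : EuclideanSpace ℝ (Fin n)) =
        (Submodule.orthogonalProjectionOnto (U ⊓ V) y : EuclideanSpace ℝ (Fin n)) ∧
      ‖x - (Submodule.orthogonalProjectionOnto (U ⊓ V) x : EuclideanSpace ℝ (Fin n))‖ =
        ‖y - (Submodule.orthogonalProjectionOnto (U ⊓ V) y : EuclideanSpace ℝ (Fin n))‖ := by
  have hy_reflection : y = U.reflection x := by
    rw [hy, Submodule.reflection_apply, Submodule.starProjection_apply]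
  simp only [← Submodule.starProjection_apply, hy_reflection]
  exact ⟨(Submodule.starProjection_reflection_of_le inf_le_left x).symm,
    (Submodule.norm_reflection_sub_starProjection_of_le inf_le_left x).symm⟩
end

section
/- Let U, V be subspaces of ℝ^n and T = (Id + R_V R_U)/2 the Douglas–Rachford operator. Then for every x ∈ ℝ^n and every k ∈ ℕ, P_{U∩V}(T^k(x)) = P_{U∩V}(x). -/
/-!
Write `P` for the orthogonal projection onto `U ⊓ V`. Since `U ⊓ V ≤ U`, we have `P ∘ P_U = P`,
hence `P ∘ R_U = 2 P - P = P`, and likewise `P ∘ R_V = P`. By linearity `P ∘ T = P`, and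
therefore `P ∘ T^[k] = P` for every `k`.
-/

namespace Submodule

variable {𝕜 E : Type*} [RCLike 𝕜] [NormedAddCommGroup E] [InnerProductSpace 𝕜 E]

theorem orthogonalProjectionOnto_reflection_of_le {K U : Submodule 𝕜 E}
    [K.HasOrthogonalProjection] [U.HasOrthogonalProjection] (h : K ≤ U) (x : E) :
    K.orthogonalProjectionOnto (U.reflection x) = K.orthogonalProjectionOnto x := by
  rw [reflection_apply, map_sub, map_nsmul, orthogonalProjectionOnto_starProjection_of_le h,
    two_smul, add_sub_cancel_right]

noncomputable def douglasRachford (U V : Submodule 𝕜 E) [U.HasOrthogonalProjection]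
    [V.HasOrthogonalProjection] (x : E) : E :=
  (2 : 𝕜)⁻¹ • (x + V.reflection (U.reflection x))

variable (U V : Submodule 𝕜 E) [U.HasOrthogonalProjection] [V.HasOrthogonalProjection]
  [(U ⊓ V).HasOrthogonalProjection]

theorem orthogonalProjectionOnto_inf_douglasRachford (x : E) :
    (U ⊓ V).orthogonalProjectionOnto (douglasRachford U V x) =
      (U ⊓ V).orthogonalProjectionOnto x := by
  rw [douglasRachford, map_smul, map_add,
    orthogonalProjectionOnto_reflection_of_le inf_le_right,
    orthogonalProjectionOnto_reflection_of_le inf_le_left, ← two_smul 𝕜, smul_smul,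
    inv_mul_cancel₀ two_ne_zero, one_smul]

theorem orthogonalProjectionOnto_inf_douglasRachford_iterate (k : ℕ) (x : E) :
    (U ⊓ V).orthogonalProjectionOnto ((douglasRachford U V)^[k] x) =
      (U ⊓ V).orthogonalProjectionOnto x :=
  congrFun (Function.iterate_invariant
    (funext (orthogonalProjectionOnto_inf_douglasRachford U V)) k) x

end Submodule

/-- The Douglas–Rachford operator `T = (Id + R_V R_U)/2` preserves the projection
onto `U ⊓ V` along its iterates. -/
theorem proj_inter_DR_iterates (n : ℕ) (U V : Submodule ℝ (EuclideanSpace ℝ (Fin n)))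
    (RU RV T : EuclideanSpace ℝ (Fin n) → EuclideanSpace ℝ (Fin n))
    (hRU : ∀ x, RU x = 2 • (Submodule.orthogonalProjectionOnto U x : EuclideanSpace ℝ (Fin n)) - x)
    (hRV : ∀ x, RV x = 2 • (Submodule.orthogonalProjectionOnto V x : EuclideanSpace ℝ (Fin n)) - x)
    (hT : ∀ x, T x = (2 : ℝ)⁻¹ • (x + RV (RU x)))
    (x : EuclideanSpace ℝ (Fin n)) (k : ℕ) :
    (Submodule.orthogonalProjectionOnto (U ⊓ V) (T^[k] x) : EuclideanSpace ℝ (Fin n)) =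
      (Submodule.orthogonalProjectionOnto (U ⊓ V) x : EuclideanSpace ℝ (Fin n)) := by
  have hRU' : RU = U.reflection := funext fun y => by
    rw [hRU, Submodule.reflection_apply, Submodule.starProjection_apply]
  have hRV' : RV = V.reflection := funext fun y => by
    rw [hRV, Submodule.reflection_apply, Submodule.starProjection_apply]
  have hT' : T = Submodule.douglasRachford U V := funext fun y => by
    rw [hT, hRU', hRV', Submodule.douglasRachford]
  rw [hT', Submodule.orthogonalProjectionOnto_inf_douglasRachford_iterate]
end

section
/- Let U, V be subspaces of ℝ^n, x ∈ ℝ^n, y = R_U(x), z = R_V(y), and let W be the affine span of {x, y, z}. Then for every w ∈ U ∩ V, the orthogonal projection of w onto W is equidistant from x, y, and z. -/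
/-! The reflections `R_U`, `R_V` are isometries fixing `w`, so `w` is equidistant from `x`, `y`,
`z`; by Pythagoras, equidistance from points of `W` passes to the orthogonal projection onto `W`. -/

theorem Submodule.dist_reflection_eq_of_mem {𝕜 E : Type*} [RCLike 𝕜] [NormedAddCommGroup E]
    [InnerProductSpace 𝕜 E] (K : Submodule 𝕜 E) [K.HasOrthogonalProjection] {w : E} (hw : w ∈ K)
    (x : E) : dist w (K.reflection x) = dist w x := by
  conv_lhs => rw [← K.reflection_mem_subspace_eq_self hw]
  exact K.reflection.dist_map w x

/-- Projecting any `w ∈ U ∩ V` onto the affine span of `{x, R_U x, R_V R_U x}` yields a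
point equidistant from `x`, `y = R_U x` and `z = R_V y`. -/
theorem proj_affineSpan_equidistant (n : ℕ) (U V : Submodule ℝ (EuclideanSpace ℝ (Fin n)))
    (x y z : EuclideanSpace ℝ (Fin n))
    (hy : y = 2 • (Submodule.orthogonalProjectionOnto U x : EuclideanSpace ℝ (Fin n)) - x)
    (hz : z = 2 • (Submodule.orthogonalProjectionOnto V y : EuclideanSpace ℝ (Fin n)) - y)
    (w : EuclideanSpace ℝ (Fin n)) (hw : w ∈ U ⊓ V) :
    ‖(EuclideanGeometry.orthogonalProjection (affineSpan ℝ {x, y, z}) w :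
        EuclideanSpace ℝ (Fin n)) - x‖ =
      ‖(EuclideanGeometry.orthogonalProjection (affineSpan ℝ {x, y, z}) w :
        EuclideanSpace ℝ (Fin n)) - y‖ ∧
    ‖(EuclideanGeometry.orthogonalProjection (affineSpan ℝ {x, y, z}) w :
        EuclideanSpace ℝ (Fin n)) - y‖ =
      ‖(EuclideanGeometry.orthogonalProjection (affineSpan ℝ {x, y, z}) w :
        EuclideanSpace ℝ (Fin n)) - z‖ := by
  have hxy : dist x w = dist y w := by
    rw [dist_comm x, dist_comm y, hy, ← U.starProjection_apply, ← U.reflection_apply,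
      U.dist_reflection_eq_of_mem hw.1]
  have hyz : dist y w = dist z w := by
    rw [dist_comm y, dist_comm z, hz, ← V.starProjection_apply, ← V.reflection_apply,
      V.dist_reflection_eq_of_mem hw.2]
  have mem_span {p} (hp : p ∈ ({x, y, z} : Set _)) : p ∈ affineSpan ℝ {x, y, z} :=
    subset_affineSpan ℝ _ hp
  simp only [← dist_eq_norm, dist_comm _ x, dist_comm _ y, dist_comm _ z]
  exact ⟨(EuclideanGeometry.dist_eq_iff_dist_orthogonalProjection_eq w (mem_span (by simp))
      (mem_span (by simp))).1 hxy,
    (EuclideanGeometry.dist_eq_iff_dist_orthogonalProjection_eq w (mem_span (by simp))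
      (mem_span (by simp))).1 hyz⟩
end

section
/- Let U, V be subspaces of ℝ^n, x ∈ ℝ^n, y = R_U(x), z = R_V(y), and W = aff{x,y,z}. Then the orthogonal projection P_W(w) is the same point for all w ∈ U ∩ V; in particular P_W(P_{U∩V}(x)) is equidistant to x, y, z. -/
/-!
Every `w ∈ U ⊓ V` is fixed by both reflections, so it is equidistant from `x`, `y = R_U x`
and `z = R_V y`. Moreover `x - y ∈ Uᗮ` and `y - z ∈ Vᗮ`, so the direction of
`W = aff{x, y, z}` is orthogonal to `U ⊓ V`: points of `U ⊓ V` differ by vectors orthogonal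
to `W` and hence share their projection onto `W`, and by Pythagoras equidistance from points
of `W` passes to that projection.
-/

namespace Submodule

variable {E : Type*} [NormedAddCommGroup E] [InnerProductSpace ℝ E]
  (K : Submodule ℝ E) [K.HasOrthogonalProjection]

theorem sub_reflection_mem_orthogonal (v : E) : v - K.reflection v ∈ Kᗮ := by
  convert Kᗮ.smul_mem (2 : ℝ) (K.sub_starProjection_mem_orthogonal v) using 1
  rw [reflection_apply]
  module

theorem dist_reflection_eq_of_mem_s6 {w : E} (hw : w ∈ K) (v : E) :
    dist (K.reflection v) w = dist v w := by
  conv_lhs => rw [← reflection_mem_subspace_eq_self hw]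
  exact K.reflection.dist_map v w

end Submodule

theorem direction_affineSpan_triple_le {k V P : Type*} [Ring k]
    [AddCommGroup V] [Module k V] [AddTorsor V P] {M : Submodule k V} {p₁ p₂ p₃ : P}
    (h₁₂ : p₁ -ᵥ p₂ ∈ M) (h₂₃ : p₂ -ᵥ p₃ ∈ M) :
    (affineSpan k {p₁, p₂, p₃}).direction ≤ M := by
  have hspan : affineSpan k {p₁, p₂, p₃} ≤ AffineSubspace.mk' p₁ M := by
    rw [affineSpan_le, Set.insert_subset_iff, Set.insert_subset_iff, Set.singleton_subset_iff]
    refine ⟨AffineSubspace.self_mem_mk' p₁ M, ?_, ?_⟩ <;>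
      rw [SetLike.mem_coe, AffineSubspace.mem_mk']
    · rw [← neg_vsub_eq_vsub_rev]
      exact M.neg_mem h₁₂
    · rw [← vsub_add_vsub_cancel p₃ p₂ p₁, ← neg_vsub_eq_vsub_rev p₂ p₃,
        ← neg_vsub_eq_vsub_rev p₁ p₂]
      exact M.add_mem (M.neg_mem h₂₃) (M.neg_mem h₁₂)
  simpa using AffineSubspace.direction_le hspan

/-- The projection onto `W = aff{x, y, z}` is the same point for all `w ∈ U ∩ V`, and in
particular `P_W (P_{U∩V} x)` is equidistant to `x`, `y`, `z`. -/
theorem proj_affineSpan_const_on_inter (n : ℕ) (U V : Submodule ℝ (EuclideanSpace ℝ (Fin n)))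
    (x y z : EuclideanSpace ℝ (Fin n))
    (hy : y = 2 • (Submodule.orthogonalProjection U x : EuclideanSpace ℝ (Fin n)) - x)
    (hz : z = 2 • (Submodule.orthogonalProjection V y : EuclideanSpace ℝ (Fin n)) - y) :
    (∀ w₁ ∈ U ⊓ V, ∀ w₂ ∈ U ⊓ V,
        (EuclideanGeometry.orthogonalProjection (affineSpan ℝ {x, y, z}) w₁ :
          EuclideanSpace ℝ (Fin n)) =
        (EuclideanGeometry.orthogonalProjection (affineSpan ℝ {x, y, z}) w₂ :
          EuclideanSpace ℝ (Fin n))) ∧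
    (‖(EuclideanGeometry.orthogonalProjection (affineSpan ℝ {x, y, z})
          ((Submodule.orthogonalProjection (U ⊓ V) x : EuclideanSpace ℝ (Fin n))) :
          EuclideanSpace ℝ (Fin n)) - x‖ =
        ‖(EuclideanGeometry.orthogonalProjection (affineSpan ℝ {x, y, z})
          ((Submodule.orthogonalProjection (U ⊓ V) x : EuclideanSpace ℝ (Fin n))) :
          EuclideanSpace ℝ (Fin n)) - y‖ ∧
      ‖(EuclideanGeometry.orthogonalProjection (affineSpan ℝ {x, y, z})
          ((Submodule.orthogonalProjection (U ⊓ V) x : EuclideanSpace ℝ (Fin n))) :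
          EuclideanSpace ℝ (Fin n)) - y‖ =
        ‖(EuclideanGeometry.orthogonalProjection (affineSpan ℝ {x, y, z})
          ((Submodule.orthogonalProjection (U ⊓ V) x : EuclideanSpace ℝ (Fin n))) :
          EuclideanSpace ℝ (Fin n)) - z‖) := by
  replace hy : y = U.reflection x := hy
  replace hz : z = V.reflection y := hz
  have hdir : (affineSpan ℝ {x, y, z}).direction ≤ (U ⊓ V)ᗮ :=
    direction_affineSpan_triple_le
      (Submodule.orthogonal_le inf_le_left (hy ▸ U.sub_reflection_mem_orthogonal x))
      (Submodule.orthogonal_le inf_le_right (hz ▸ V.sub_reflection_mem_orthogonal y))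
  refine ⟨fun w₁ hw₁ w₂ hw₂ => ?_, ?_⟩
  · have hw : w₁ - w₂ ∈ (affineSpan ℝ {x, y, z}).directionᗮ :=
      Submodule.orthogonal_le hdir ((U ⊓ V).le_orthogonal_orthogonal ((U ⊓ V).sub_mem hw₁ hw₂))
    rw [EuclideanGeometry.orthogonalProjection_eq_orthogonalProjection_iff_vsub_mem.mpr
      hw]
  · generalize (U ⊓ V).orthogonalProjectionOnto x = p
    obtain ⟨p, hp⟩ := p
    have hxy : dist x p = dist y p := by rw [hy, U.dist_reflection_eq_of_mem_s6 hp.1]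
    have hyz : dist y p = dist z p := by rw [hz, V.dist_reflection_eq_of_mem_s6 hp.2]
    have hxW : x ∈ affineSpan ℝ {x, y, z} := mem_affineSpan ℝ (by simp)
    have hyW : y ∈ affineSpan ℝ {x, y, z} := mem_affineSpan ℝ (by simp)
    have hzW : z ∈ affineSpan ℝ {x, y, z} := mem_affineSpan ℝ (by simp)
    simp only [← dist_eq_norm, dist_comm _ x, dist_comm _ y, dist_comm _ z]
    exact ⟨(EuclideanGeometry.dist_eq_iff_dist_orthogonalProjection_eq p hxW hyW).1 hxy,
      (EuclideanGeometry.dist_eq_iff_dist_orthogonalProjection_eq p hyW hzW).1 hyz⟩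
end

section
/- Let U, V be subspaces of ℝ^n, x ∈ ℝ^n, y = R_U(x), z = R_V(y). The points x, y, z cannot be pairwise distinct and collinear; i.e., if x, y, z are pairwise distinct then they are affinely independent. -/
open EuclideanGeometry

section

variable {E : Type*} [NormedAddCommGroup E] [InnerProductSpace ℝ E]

theorem Submodule.two_smul_orthogonalProjectionOnto_sub_eq_reflection (K : Submodule ℝ E)
    [K.HasOrthogonalProjection] (x : E) :
    2 • (K.orthogonalProjectionOnto x : E) - x = K.reflection x := by
  rw [Submodule.reflection_apply, Submodule.starProjection_apply]

theorem cospherical_reflection_reflection (U V : Submodule ℝ E) [U.HasOrthogonalProjection]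
    [V.HasOrthogonalProjection] (x : E) :
    Cospherical ({x, U.reflection x, V.reflection (U.reflection x)} : Set E) := by
  refine ⟨0, ‖x‖, ?_⟩
  simp only [Set.mem_insert_iff, Set.mem_singleton_iff, dist_zero_right]
  rintro p (rfl | rfl | rfl) <;> simp only [LinearIsometryEquiv.norm_map]

end

/-- The points `x`, `y = R_U x`, `z = R_V y` cannot be pairwise distinct and collinear:
if they are pairwise distinct then they are affinely independent. -/
theorem reflections_affineIndependent (n : ℕ) (U V : Submodule ℝ (EuclideanSpace ℝ (Fin n)))
    (x y z : EuclideanSpace ℝ (Fin n))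
    (hy : y = 2 • (Submodule.orthogonalProjectionOnto U x : EuclideanSpace ℝ (Fin n)) - x)
    (hz : z = 2 • (Submodule.orthogonalProjectionOnto V y : EuclideanSpace ℝ (Fin n)) - y)
    (hxy : x ≠ y) (hyz : y ≠ z) (hxz : x ≠ z) :
    AffineIndependent ℝ ![x, y, z] := by
  rw [Submodule.two_smul_orthogonalProjectionOnto_sub_eq_reflection] at hy hz
  subst hy hz
  exact (cospherical_reflection_reflection U V x).affineIndependent_of_ne hxy hxz hyz
end

section
/- Let U, V be subspaces of ℝ^n and define the circumcenter operator C_T(x) as the unique point in aff{x, R_U(x), R_V R_U(x)} equidistant from x, R_U(x), and R_V R_U(x). Then C_T(x) = x if and only if x ∈ U ∩ V. -/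
/-!
`C_T(x) = x` forces `R_U x = x` and `R_V R_U x = x`, since `C_T(x)` is equidistant from all three
points; conversely, if both reflections fix `x` the affine span collapses to `{x}`. A reflection fixes
exactly the points of its mirror subspace.
-/

theorem eq_left_iff_of_mem_affineSpan_of_norm_sub_eq {E : Type*} [NormedAddCommGroup E]
    [Module ℝ E] {x y z c : E}
    (hc : c ∈ affineSpan ℝ ({x, y, z} : Set E))
    (hcy : ‖c - x‖ = ‖c - y‖) (hcz : ‖c - x‖ = ‖c - z‖) :
    c = x ↔ y = x ∧ z = x := by
  constructor
  · rintro rfl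
    rw [sub_self, norm_zero, eq_comm, norm_eq_zero, sub_eq_zero] at hcy hcz
    exact ⟨hcy.symm, hcz.symm⟩
  · rintro ⟨rfl, rfl⟩
    simpa using hc

theorem Submodule.two_smul_coe_orthogonalProjectionOnto_sub {E : Type*} [NormedAddCommGroup E]
    [InnerProductSpace ℝ E] (K : Submodule ℝ E) [K.HasOrthogonalProjection] (x : E) :
    2 • (K.orthogonalProjectionOnto x : E) - x = K.reflection x := by
  rw [K.reflection_apply, K.coe_orthogonalProjectionOnto_apply]

/-- If `c` is the circumcenter of `{x, R_U x, R_V R_U x}`, i.e. the point of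
`aff{x, y, z}` equidistant from `x`, `y`, `z`, then `c = x` iff `x ∈ U ∩ V`. -/
theorem circumcenter_fixed_iff (n : ℕ) (U V : Submodule ℝ (EuclideanSpace ℝ (Fin n)))
    (x y z c : EuclideanSpace ℝ (Fin n))
    (hy : y = 2 • (U.orthogonalProjectionOnto x : EuclideanSpace ℝ (Fin n)) - x)
    (hz : z = 2 • (V.orthogonalProjectionOnto y : EuclideanSpace ℝ (Fin n)) - y)
    (hc : c ∈ affineSpan ℝ ({x, y, z} : Set (EuclideanSpace ℝ (Fin n))))
    (hcx : ‖c - x‖ = ‖c - y‖) (hcz : ‖c - x‖ = ‖c - z‖) :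
    c = x ↔ x ∈ U ⊓ V := by
  rw [U.two_smul_coe_orthogonalProjectionOnto_sub] at hy
  rw [V.two_smul_coe_orthogonalProjectionOnto_sub] at hz
  rw [eq_left_iff_of_mem_affineSpan_of_norm_sub_eq hc hcx hcz, hz, hy, Submodule.mem_inf,
    ← U.reflection_eq_self_iff, ← V.reflection_eq_self_iff]
  exact and_congr_right fun hU ↦ by rw [hU]
end

section
/- Let U, V be subspaces of ℝ^n, x ∈ ℝ^n, and let C_T(x) = P_{W}(P_{U∩V}(x)) where W = aff{x, R_U(x), R_V R_U(x)}. Then P_{U∩V}(C_T(x)) = P_{U∩V}(x). -/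
/-! Both reflections `R_U` and `R_V` fix `P_{U∩V}` (since `U ∩ V` lies in `U` and in `V`),
so the affine map `P_{U∩V}` is constant on `{x, R_U x, R_V R_U x}`, hence on its affine hull `W`,
which contains `C_T x`. -/

open Submodule

theorem AffineMap.eq_of_mem_affineSpan_of_forall_eq {k V₁ P₁ V₂ P₂ : Type*} [Ring k]
    [AddCommGroup V₁] [Module k V₁] [AddTorsor V₁ P₁] [AddCommGroup V₂] [Module k V₂]
    [AddTorsor V₂ P₂] (f : P₁ →ᵃ[k] P₂) {s : Set P₁} {c : P₂} (hs : ∀ p ∈ s, f p = c)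
    {q : P₁} (hq : q ∈ affineSpan k s) : f q = c := by
  have hmap : (affineSpan k s).map f ≤ affineSpan k {c} := by
    rw [AffineSubspace.map_span]
    exact affineSpan_mono k (Set.image_subset_iff.mpr hs)
  exact (AffineSubspace.mem_affineSpan_singleton k V₂).mp (hmap (AffineSubspace.mem_map_of_mem f hq))

theorem Submodule.starProjection_reflection_of_le_s9 {𝕜 E : Type*} [RCLike 𝕜]
    [NormedAddCommGroup E] [InnerProductSpace 𝕜 E] {K U : Submodule 𝕜 E}
    [K.HasOrthogonalProjection] [U.HasOrthogonalProjection] (h : K ≤ U) (x : E) :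
    K.starProjection (U.reflection x) = K.starProjection x := by
  rw [reflection_apply, map_sub, map_nsmul, ← ContinuousLinearMap.comp_apply,
    starProjection_comp_starProjection_of_le h, two_nsmul, add_sub_cancel_right]

/-- The circumcenter `C_T x = P_W (P_{U∩V} x)`, with `W = aff{x, R_U x, R_V R_U x}`,
has the same projection onto `U ∩ V` as `x`. -/
theorem proj_inter_circumcenter (n : ℕ) (U V : Submodule ℝ (EuclideanSpace ℝ (Fin n)))
    (x y z cT : EuclideanSpace ℝ (Fin n))
    (hy : y = 2 • (Submodule.orthogonalProjectionOnto U x : EuclideanSpace ℝ (Fin n)) - x)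
    (hz : z = 2 • (Submodule.orthogonalProjectionOnto V y : EuclideanSpace ℝ (Fin n)) - y)
    (hcT : cT = (EuclideanGeometry.orthogonalProjection (affineSpan ℝ {x, y, z})
        ((Submodule.orthogonalProjectionOnto (U ⊓ V) x : EuclideanSpace ℝ (Fin n))) :
        EuclideanSpace ℝ (Fin n))) :
    (Submodule.orthogonalProjectionOnto (U ⊓ V) cT : EuclideanSpace ℝ (Fin n)) =
      (Submodule.orthogonalProjectionOnto (U ⊓ V) x : EuclideanSpace ℝ (Fin n)) := by
  simp only [coe_orthogonalProjectionOnto_apply, ← reflection_apply] at hy hz hcT ⊢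
  have hPy : (U ⊓ V).starProjection y = (U ⊓ V).starProjection x := by
    rw [hy, starProjection_reflection_of_le_s9 inf_le_left]
  have hPz : (U ⊓ V).starProjection z = (U ⊓ V).starProjection x := by
    rw [hz, starProjection_reflection_of_le_s9 inf_le_right, hPy]
  have hcT_mem : cT ∈ affineSpan ℝ {x, y, z} := hcT ▸ EuclideanGeometry.orthogonalProjection_mem _
  refine (U ⊓ V).starProjection.toLinearMap.toAffineMap.eq_of_mem_affineSpan_of_forall_eq
    ?_ hcT_mem
  rintro p (rfl | rfl | rfl)
  exacts [rfl, hPy, hPz]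
end

section
/- Let U, V be subspaces of ℝ^n, T the Douglas–Rachford operator, and C_T(x) = P_W(P_{U∩V}(x)) with W = aff{x, R_U(x), R_V R_U(x)}. Then dist(C_T(x), U∩V)² = dist(T(x), U∩V)² − ‖T(x) − C_T(x)‖²; in particular dist(C_T(x), U∩V) ≤ dist(T(x), U∩V). -/
/-!
The reflections `R_U`, `R_V` move points only along `Uᗮ` and `Vᗮ`, both contained in `(U ⊓ V)ᗮ`,
so `W = aff {x, R_U x, R_V R_U x}` lies in the fibre `x + (U ⊓ V)ᗮ` of `P_{U ⊓ V}`. Hence `T x`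
and `C_T x`, both in `W`, share the projection `p = P_{U ⊓ V} x`, and the identity is Pythagoras
for the right angle at `C_T x = P_W p`.
-/

namespace Submodule

variable {𝕜 E : Type*} [RCLike 𝕜] [NormedAddCommGroup E] [InnerProductSpace 𝕜 E]
  (K : Submodule 𝕜 E) [K.HasOrthogonalProjection]

theorem reflection_sub_self_mem_orthogonal (v : E) : K.reflection v - v ∈ Kᗮ := by
  have h : K.reflection v - v = (-2 : 𝕜) • (v - K.starProjection v) := by
    rw [reflection_apply]; module
  exact h ▸ Kᗮ.smul_mem _ (K.sub_starProjection_mem_orthogonal v)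

theorem starProjection_eq_of_mem_mk'_orthogonal {x q : E}
    (hq : q ∈ AffineSubspace.mk' x Kᗮ) : K.starProjection q = K.starProjection x := by
  rwa [AffineSubspace.mem_mk', vsub_eq_sub, ← starProjection_apply_eq_zero_iff, map_sub,
    sub_eq_zero] at hq

end Submodule

open Submodule in
theorem affineSpan_reflection_reflection_le {𝕜 E : Type*} [RCLike 𝕜] [NormedAddCommGroup E]
    [InnerProductSpace 𝕜 E] (U V : Submodule 𝕜 E) [U.HasOrthogonalProjection]
    [V.HasOrthogonalProjection] (x : E) :
    affineSpan 𝕜 {x, U.reflection x, V.reflection (U.reflection x)} ≤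
      AffineSubspace.mk' x (U ⊓ V)ᗮ := by
  have hU : U.reflection x - x ∈ (U ⊓ V)ᗮ :=
    orthogonal_le inf_le_left (U.reflection_sub_self_mem_orthogonal x)
  have hV : V.reflection (U.reflection x) - U.reflection x ∈ (U ⊓ V)ᗮ :=
    orthogonal_le inf_le_right (V.reflection_sub_self_mem_orthogonal _)
  rw [affineSpan_le]
  rintro q (rfl | rfl | rfl) <;> rw [SetLike.mem_coe, AffineSubspace.mem_mk', vsub_eq_sub]
  · simp
  · exact hU
  · simpa using add_mem hV hU

/-- `dist(C_T x, U∩V)² = dist(T x, U∩V)² - ‖T x - C_T x‖²`, and in particular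
`dist(C_T x, U∩V) ≤ dist(T x, U∩V)`, where `T` is the Douglas–Rachford operator and
`C_T x` is the circumcenter of `{x, R_U x, R_V R_U x}`. -/
theorem circumcenter_improves_DR (n : ℕ) (U V : Submodule ℝ (EuclideanSpace ℝ (Fin n)))
    (x y z Tx cT : EuclideanSpace ℝ (Fin n))
    (hy : y = 2 • (Submodule.orthogonalProjection U x : EuclideanSpace ℝ (Fin n)) - x)
    (hz : z = 2 • (Submodule.orthogonalProjection V y : EuclideanSpace ℝ (Fin n)) - y)
    (hTx : Tx = (2 : ℝ)⁻¹ • (x + z))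
    (hcT : cT = (EuclideanGeometry.orthogonalProjection (affineSpan ℝ {x, y, z})
        ((Submodule.orthogonalProjection (U ⊓ V) x : EuclideanSpace ℝ (Fin n))) :
        EuclideanSpace ℝ (Fin n))) :
    ‖cT - (Submodule.orthogonalProjection (U ⊓ V) cT : EuclideanSpace ℝ (Fin n))‖ ^ 2 =
        ‖Tx - (Submodule.orthogonalProjection (U ⊓ V) Tx : EuclideanSpace ℝ (Fin n))‖ ^ 2 -
          ‖Tx - cT‖ ^ 2 ∧
      ‖cT - (Submodule.orthogonalProjection (U ⊓ V) cT : EuclideanSpace ℝ (Fin n))‖ ≤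
        ‖Tx - (Submodule.orthogonalProjection (U ⊓ V) Tx : EuclideanSpace ℝ (Fin n))‖ := by
  simp only [Submodule.coe_orthogonalProjectionOnto_apply] at *
  set W := affineSpan ℝ {x, y, z}
  set p := (U ⊓ V).starProjection x
  have hW : W ≤ AffineSubspace.mk' x (U ⊓ V)ᗮ := by
    subst hz hy
    simpa only [Submodule.reflection_apply] using affineSpan_reflection_reflection_le U V x
  have hTxW : Tx ∈ W := by
    have hmid : Tx = AffineMap.lineMap x z ((2 : ℝ)⁻¹) := by
      rw [hTx, AffineMap.lineMap_apply_module]; module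
    exact hmid ▸ affineSpan_mono ℝ (Set.insert_subset_insert (Set.subset_insert y {z}))
      (AffineMap.lineMap_mem_affineSpan_pair _ x z)
  have hcTW : cT ∈ W := hcT ▸ EuclideanGeometry.orthogonalProjection_mem _
  have hTx_proj := (U ⊓ V).starProjection_eq_of_mem_mk'_orthogonal (hW hTxW)
  have hcT_proj := (U ⊓ V).starProjection_eq_of_mem_mk'_orthogonal (hW hcTW)
  have hpyth : ‖Tx - p‖ ^ 2 = ‖Tx - cT‖ ^ 2 + ‖cT - p‖ ^ 2 := by
    have h := EuclideanGeometry.dist_sq_eq_dist_orthogonalProjection_sq_add_dist_orthogonalProjection_sq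
      p hTxW
    rw [← hcT] at h
    simpa only [dist_eq_norm, norm_sub_rev p cT, sq] using h
  rw [hTx_proj, hcT_proj]
  exact ⟨by linarith, le_of_pow_le_pow_left₀ two_ne_zero (norm_nonneg _)
    (by linarith [sq_nonneg ‖Tx - cT‖])⟩
end

section
/- Let U, V be subspaces of ℝ^n and T = (Id + R_V R_U)/2 the Douglas–Rachford operator. Then dist(T^k(x), U + V) = dist(x, U + V) for all x ∈ ℝ^n and k ∈ ℕ. -/
open Submodule

lemma Submodule.sub_starProjection_eq_of_sub_mem {𝕜 E : Type*} [RCLike 𝕜] [NormedAddCommGroup E]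
    [InnerProductSpace 𝕜 E] (W : Submodule 𝕜 E) [W.HasOrthogonalProjection] {x y : E}
    (h : y - x ∈ W) : y - W.starProjection y = x - W.starProjection x := by
  have hfix : W.starProjection (y - x) = y - x := starProjection_eq_self_iff.mpr h
  rw [map_sub] at hfix
  rw [sub_eq_sub_iff_sub_eq_sub, hfix]

lemma Submodule.iterate_sub_self_mem {R M : Type*} [Ring R] [AddCommGroup M] [Module R M]
    (W : Submodule R M) {f : M → M} (hf : ∀ x, f x - x ∈ W) (k : ℕ) (x : M) :
    f^[k] x - x ∈ W := by
  induction k with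
  | zero => simp
  | succ k ih =>
    rw [Function.iterate_succ_apply', ← sub_add_sub_cancel _ (f^[k] x)]
    exact add_mem (hf _) ih

/-- With `a = P_U x` and `b = P_V (R_U x)`, the Douglas–Rachford step moves `x` by `b - a`. -/
lemma inv_two_smul_add_reflection_sub_self {E : Type*} [AddCommGroup E] [Module ℝ E]
    (x a b : E) : (2 : ℝ)⁻¹ • (x + (2 • b - (2 • a - x))) - x = b - a := by
  module

/-- The Douglas–Rachford iterates preserve the distance to `U + V`. -/
theorem DR_preserves_dist_sup (n : ℕ) (U V : Submodule ℝ (EuclideanSpace ℝ (Fin n)))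
    (T : EuclideanSpace ℝ (Fin n) → EuclideanSpace ℝ (Fin n))
    (hT : ∀ x, T x = (2 : ℝ)⁻¹ • (x +
      (2 • (Submodule.orthogonalProjectionOnto V
          (2 • (Submodule.orthogonalProjectionOnto U x : EuclideanSpace ℝ (Fin n)) - x) :
          EuclideanSpace ℝ (Fin n)) -
        (2 • (Submodule.orthogonalProjectionOnto U x : EuclideanSpace ℝ (Fin n)) - x))))
    (x : EuclideanSpace ℝ (Fin n)) (k : ℕ) :
    ‖T^[k] x - (Submodule.orthogonalProjectionOnto (U ⊔ V) (T^[k] x) : EuclideanSpace ℝ (Fin n))‖ =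
      ‖x - (Submodule.orthogonalProjectionOnto (U ⊔ V) x : EuclideanSpace ℝ (Fin n))‖ := by
  have hstep : ∀ y, T y - y ∈ U ⊔ V := fun y ↦ by
    rw [hT, inv_two_smul_add_reflection_sub_self]
    exact sub_mem (mem_sup_right (coe_mem _)) (mem_sup_left (coe_mem _))
  simp only [coe_orthogonalProjectionOnto_apply]
  rw [(U ⊔ V).sub_starProjection_eq_of_sub_mem ((U ⊔ V).iterate_sub_self_mem hstep k x)]
end

section
/- Let U, V be subspaces of ℝ^n and Fix T = (U ∩ V) + (U⊥ ∩ V⊥) the fixed point set of the Douglas–Rachford operator. Then for x ∈ ℝ^n, P_{U∩V}(x) = P_{Fix T}(x) if and only if x ∈ U + V. -/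
/-!
Since `Uᗮ ⊓ Vᗮ = (U ⊔ V)ᗮ` and `U ⊓ V ≤ U ⊔ V`, the fixed-point set is the orthogonal sum
`(U ⊓ V) ⊔ (U ⊔ V)ᗮ`, so its projection is `P_{U ⊓ V} + P_{(U ⊔ V)ᗮ}`. The two projections of
the theorem therefore agree exactly when `P_{(U ⊔ V)ᗮ} x = x - P_{U ⊔ V} x` vanishes,
i.e. when `x ∈ U ⊔ V`.
-/

namespace Submodule

variable {𝕜 E : Type*} [RCLike 𝕜] [NormedAddCommGroup E] [InnerProductSpace 𝕜 E]

theorem starProjection_sup_of_isOrtho {K L : Submodule 𝕜 E} [K.HasOrthogonalProjection]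
    [L.HasOrthogonalProjection] [(K ⊔ L).HasOrthogonalProjection] (h : K ⟂ L) (x : E) :
    (K ⊔ L).starProjection x = K.starProjection x + L.starProjection x := by
  refine eq_starProjection_of_mem_orthogonal (add_mem_sup (coe_mem _) (coe_mem _)) ?_
  rw [← inf_orthogonal]
  constructor
  · rw [← sub_sub]
    exact sub_mem (sub_starProjection_mem_orthogonal x) (h.symm.le (coe_mem _))
  · rw [add_comm, ← sub_sub]
    exact sub_mem (sub_starProjection_mem_orthogonal x) (h.le (coe_mem _))

theorem starProjection_inf_eq_starProjection_sup_inf_orthogonal_iff [FiniteDimensional 𝕜 E]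
    (U V : Submodule 𝕜 E) (x : E) :
    (U ⊓ V).starProjection x = ((U ⊓ V) ⊔ (Uᗮ ⊓ Vᗮ)).starProjection x ↔ x ∈ U ⊔ V := by
  have hortho : U ⊓ V ⟂ (U ⊔ V)ᗮ :=
    (isOrtho_orthogonal_right (U ⊔ V)).mono_left (inf_le_left.trans le_sup_left)
  simp only [inf_orthogonal]
  rw [starProjection_sup_of_isOrtho hortho, left_eq_add, starProjection_orthogonal_val,
    sub_eq_zero, eq_comm, starProjection_eq_self_iff]

end Submodule

/-- `P_{U∩V} x = P_{Fix T} x` iff `x ∈ U + V`, where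
`Fix T = (U ⊓ V) ⊔ (Uᗮ ⊓ Vᗮ)`. -/
theorem proj_inter_eq_proj_fix_iff (n : ℕ) (U V : Submodule ℝ (EuclideanSpace ℝ (Fin n)))
    (x : EuclideanSpace ℝ (Fin n)) :
    (Submodule.orthogonalProjection (U ⊓ V) x : EuclideanSpace ℝ (Fin n)) =
        (Submodule.orthogonalProjection ((U ⊓ V) ⊔ (Uᗮ ⊓ Vᗮ)) x : EuclideanSpace ℝ (Fin n)) ↔
      x ∈ U ⊔ V :=
  Submodule.starProjection_inf_eq_starProjection_sup_inf_orthogonal_iff U V x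
end
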